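/- arXiv:2604.25717 — 4 statements merged into one kernel-verified Lean document; each statement's English description precedes it below -/
import Mathlib

section
/- Let k ≥ 1 be an integer, γ > 0, λ₁,…,λ_k > 0, K > 0, and let U : ℝ → ℝ be twice continuously differentiable with U″(x) ≥ −K for all x ∈ ℝ. Set h* = min{ 4/(K+1), min_{1≤ℓ≤k} 8/(γλ_ℓ²), 8/(2γ + 2(K+1) + γk) } and let h ∈ (0, h*). Then for every w ∈ ℝ^{k+2} there exists a unique y ∈ ℝ^{k+2} such that G(y, w, h) = 0; that is, the implicit AVF step is uniquely solvable. -/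
open scoped BigOperators

/-- The defining map of the implicit AVF step for the quasi-Markovian GLE.
Index `0` is the `v`-component, indices `1,…,k` (written `ℓ.succ.castSucc` for `ℓ : Fin k`)
are the `z`-components, and index `k+1` (`Fin.last (k+1)`) is the `x`-component. -/
noncomputable def G (k : ℕ) (γ : ℝ) (lam : Fin k → ℝ) (U : ℝ → ℝ) (h : ℝ)
    (y w : EuclideanSpace ℝ (Fin (k + 2))) : EuclideanSpace ℝ (Fin (k + 2)) :=
  (EuclideanSpace.equiv (Fin (k + 2)) ℝ).symm <| fun i =>
    Fin.cases
      (y 0 - w 0 + (γ * h / 4) * (y 0 + w 0)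
        + h * (∫ θ in (0:ℝ)..1,
            deriv U (w (Fin.last (k + 1)) + θ * (y (Fin.last (k + 1)) - w (Fin.last (k + 1)))))
        - (h / 2) * ∑ ℓ : Fin k, lam ℓ * (y ℓ.succ.castSucc + w ℓ.succ.castSucc))
      (fun j =>
        Fin.lastCases
          (y (Fin.last (k + 1)) - w (Fin.last (k + 1))
            - (γ * h / 4) * (y (Fin.last (k + 1)) + w (Fin.last (k + 1)))
            - (h / 2) * (y 0 + w 0))
          (fun ℓ =>
            y ℓ.succ.castSucc - w ℓ.succ.castSucc
              + (lam ℓ * h / 2) * (y 0 + w 0)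
              + (γ * lam ℓ * h / 4) * (y (Fin.last (k + 1)) + w (Fin.last (k + 1))))
          j)
      i

/-!
The `x̄`- and `z̄`-components of `G(y, w, h) = 0` are linear, so they determine `x̄` and `z̄` as
affine functions of `v̄` (`x̄` increasing, every `z̄_ℓ` decreasing). Substituting them leaves one
scalar equation `φ(v̄) = 0`. The bound `U'' ≥ -K` makes `t ↦ ∫₀¹ U'(x + θ(t - x)) dθ + (K/2) t`
monotone, so `φ(s) - c s` is monotone with `c = 1 + γh/4 - K h² / (4 (1 - γh/4))`, and the step
size restriction gives `c > 0`. A continuous function whose slopes are bounded below by `c > 0`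
has exactly one zero.
-/

open Filter intervalIntegral

theorem existsUnique_eq_zero_of_monotone_sub_mul {f : ℝ → ℝ} {c : ℝ} (hf : Continuous f)
    (hc : 0 < c) (hmono : Monotone fun s => f s - c * s) : ∃! s, f s = 0 := by
  have hsplit : f = fun s => (f s - c * s) + c * s := by ext; ring
  have hstrict : StrictMono f := hsplit ▸ hmono.add_strictMono (strictMono_mul_left_of_pos hc)
  have htop : Tendsto f atTop atTop := hsplit ▸ tendsto_atTop_add_left_of_le' _ (f 0 - c * 0)
    ((eventually_ge_atTop 0).mono fun _ hs => hmono hs) (tendsto_id.const_mul_atTop hc)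
  have hbot : Tendsto f atBot atBot := hsplit ▸ tendsto_atBot_add_left_of_ge' _ (f 0 - c * 0)
    ((eventually_le_atBot 0).mono fun _ hs => hmono hs) (tendsto_id.const_mul_atBot hc)
  obtain ⟨s, hs⟩ := hf.surjective htop hbot 0
  exact ⟨s, hs, fun t ht => hstrict.injective (ht.trans hs.symm)⟩

theorem monotone_add_mul_of_neg_le_deriv {f : ℝ → ℝ} {K : ℝ} (hf : Differentiable ℝ f)
    (hf' : ∀ x, -K ≤ deriv f x) : Monotone fun x => f x + K * x := by
  refine monotone_of_deriv_nonneg (hf.add (differentiable_id.const_mul K)) fun x => ?_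
  rw [((hf x).hasDerivAt.fun_add (hasDerivAt_const_mul K)).deriv]
  linarith [hf' x]

noncomputable def segmentAvg (f : ℝ → ℝ) (x t : ℝ) : ℝ := ∫ θ in (0:ℝ)..1, f (x + θ * (t - x))

@[fun_prop]
theorem continuous_segmentAvg {f : ℝ → ℝ} (hf : Continuous f) (x : ℝ) :
    Continuous fun t => segmentAvg f x t :=
  continuous_parametric_intervalIntegral_of_continuous' (by fun_prop) 0 1

theorem monotone_segmentAvg {f : ℝ → ℝ} (hf : Continuous f) (hmono : Monotone f) (x : ℝ) :
    Monotone (segmentAvg f x) := fun a b hab =>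
  integral_mono_on zero_le_one ((by fun_prop : Continuous _).intervalIntegrable _ _)
    ((by fun_prop : Continuous _).intervalIntegrable _ _) fun θ hθ =>
    hmono (by nlinarith [hθ.1])

theorem monotone_segmentAvg_add_mul {f : ℝ → ℝ} {K : ℝ} (hf : Continuous f)
    (hmono : Monotone fun x => f x + K * x) (x : ℝ) :
    Monotone fun t => segmentAvg f x t + K / 2 * t := by
  have h := (monotone_segmentAvg (by fun_prop) hmono x).add_const (-(K * x / 2))
  convert h using 2 with t
  rw [segmentAvg, segmentAvg, integral_add ((by fun_prop : Continuous _).intervalIntegrable _ _)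
    ((by fun_prop : Continuous _).intervalIntegrable _ _)]
  simp only [integral_const_mul, integral_const, integral_mul_const, integral_id, smul_eq_mul,
    integral_add intervalIntegrable_const (intervalIntegrable_id.mul_const _)]
  ring

namespace AVF

variable {k : ℕ}

theorem G_apply_zero (γ : ℝ) (lam : Fin k → ℝ) (U : ℝ → ℝ) (h : ℝ)
    (y w : EuclideanSpace ℝ (Fin (k + 2))) :
    G k γ lam U h y w 0 = y 0 - w 0 + γ * h / 4 * (y 0 + w 0)
      + h * segmentAvg (deriv U) (w (Fin.last (k + 1))) (y (Fin.last (k + 1)))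
      - h / 2 * ∑ ℓ : Fin k, lam ℓ * (y ℓ.succ.castSucc + w ℓ.succ.castSucc) :=
  rfl

theorem G_apply_succ_castSucc (γ : ℝ) (lam : Fin k → ℝ) (U : ℝ → ℝ) (h : ℝ)
    (y w : EuclideanSpace ℝ (Fin (k + 2))) (ℓ : Fin k) :
    G k γ lam U h y w ℓ.succ.castSucc = y ℓ.succ.castSucc - w ℓ.succ.castSucc
      + lam ℓ * h / 2 * (y 0 + w 0)
      + γ * lam ℓ * h / 4 * (y (Fin.last (k + 1)) + w (Fin.last (k + 1))) := by
  simp [G]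

theorem G_apply_last (γ : ℝ) (lam : Fin k → ℝ) (U : ℝ → ℝ) (h : ℝ)
    (y w : EuclideanSpace ℝ (Fin (k + 2))) :
    G k γ lam U h y w (Fin.last (k + 1)) = y (Fin.last (k + 1)) - w (Fin.last (k + 1))
      - γ * h / 4 * (y (Fin.last (k + 1)) + w (Fin.last (k + 1)))
      - h / 2 * (y 0 + w 0) := by
  simp [G, ← Fin.succ_last]

theorem ext_components {y y' : EuclideanSpace ℝ (Fin (k + 2))} (h0 : y 0 = y' 0)
    (hz : ∀ ℓ : Fin k, y ℓ.succ.castSucc = y' ℓ.succ.castSucc)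
    (hlast : y (Fin.last (k + 1)) = y' (Fin.last (k + 1))) : y = y' := by
  ext i
  induction i using Fin.cases with
  | zero => exact h0
  | succ j =>
    induction j using Fin.lastCases with
    | last => exact hlast
    | cast ℓ => rw [Fin.succ_castSucc]; exact hz ℓ

variable (γ : ℝ) (lam : Fin k → ℝ) (U : ℝ → ℝ) (h : ℝ) (w : EuclideanSpace ℝ (Fin (k + 2)))

noncomputable def xBar (s : ℝ) : ℝ :=
  ((1 + γ * h / 4) * w (Fin.last (k + 1)) + h / 2 * (s + w 0)) / (1 - γ * h / 4)

noncomputable def zBar (ℓ : Fin k) (s : ℝ) : ℝ :=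
  w ℓ.succ.castSucc - lam ℓ * h / 2 * (s + w 0)
    - γ * lam ℓ * h / 4 * (xBar γ h w s + w (Fin.last (k + 1)))

/-- The state with `v̄ = s` whose `z̄`- and `x̄`-components solve the linear components of
`G(·, w, h) = 0`. -/
noncomputable def lift (s : ℝ) : EuclideanSpace ℝ (Fin (k + 2)) :=
  (EuclideanSpace.equiv (Fin (k + 2)) ℝ).symm
    (Fin.cases s (Fin.lastCases (xBar γ h w s) (zBar γ lam h w · s)))

noncomputable def reduced (s : ℝ) : ℝ := G k γ lam U h (lift γ lam h w s) w 0

variable {γ lam U h w}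

@[simp] theorem lift_apply_zero (s : ℝ) : lift γ lam h w s 0 = s := rfl

@[simp] theorem lift_apply_succ_castSucc (s : ℝ) (ℓ : Fin k) :
    lift γ lam h w s ℓ.succ.castSucc = zBar γ lam h w ℓ s := by
  simp [lift]

@[simp] theorem lift_apply_last (s : ℝ) :
    lift γ lam h w s (Fin.last (k + 1)) = xBar γ h w s := by
  simp [lift, ← Fin.succ_last]

theorem xBar_mul (hD : 1 - γ * h / 4 ≠ 0) (s : ℝ) :
    xBar γ h w s * (1 - γ * h / 4) = (1 + γ * h / 4) * w (Fin.last (k + 1)) + h / 2 * (s + w 0) :=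
  div_mul_cancel₀ _ hD

theorem G_lift_eq_zero_iff (hD : 1 - γ * h / 4 ≠ 0) (s : ℝ) :
    G k γ lam U h (lift γ lam h w s) w = 0 ↔ reduced γ lam U h w s = 0 := by
  refine ⟨fun hG => congrArg (· 0) hG, fun hs => ext_components hs (fun ℓ => ?_) ?_⟩
  · rw [PiLp.zero_apply, G_apply_succ_castSucc, lift_apply_succ_castSucc, lift_apply_zero,
      lift_apply_last, zBar]
    ring
  · rw [PiLp.zero_apply, G_apply_last, lift_apply_zero, lift_apply_last]
    linear_combination xBar_mul hD s

theorem eq_lift_of_G_eq_zero (hD : 1 - γ * h / 4 ≠ 0) {y : EuclideanSpace ℝ (Fin (k + 2))}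
    (hy : G k γ lam U h y w = 0) : y = lift γ lam h w (y 0) := by
  have hcomp : ∀ i, G k γ lam U h y w i = 0 := fun i => by rw [hy]; rfl
  have hlast : y (Fin.last (k + 1)) = xBar γ h w (y 0) := by
    have e := hcomp (Fin.last (k + 1))
    rw [G_apply_last] at e
    refine mul_right_cancel₀ hD ?_
    linear_combination e - xBar_mul hD (y 0)
  refine ext_components rfl (fun ℓ => ?_) (by rw [hlast, lift_apply_last])
  have e := hcomp ℓ.succ.castSucc
  rw [G_apply_succ_castSucc, hlast] at e
  rw [lift_apply_succ_castSucc, zBar]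
  linear_combination e

theorem reduced_eq (s : ℝ) : reduced γ lam U h w s =
    s - w 0 + γ * h / 4 * (s + w 0)
      + h * segmentAvg (deriv U) (w (Fin.last (k + 1))) (xBar γ h w s)
      - h / 2 * ∑ ℓ : Fin k, lam ℓ * (zBar γ lam h w ℓ s + w ℓ.succ.castSucc) := by
  simp only [reduced, G_apply_zero, lift_apply_zero, lift_apply_last, lift_apply_succ_castSucc]

theorem continuous_reduced (hU : Continuous (deriv U)) : Continuous (reduced γ lam U h w) := by
  rw [show reduced γ lam U h w = _ from funext reduced_eq]
  unfold zBar xBar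
  fun_prop

theorem monotone_reduced_sub_mul {K : ℝ} (hγ : 0 ≤ γ) (hlam : ∀ ℓ, 0 ≤ lam ℓ) (hh : 0 ≤ h)
    (hD : 0 < 1 - γ * h / 4) (hU : Continuous (deriv U))
    (hUK : Monotone fun x => deriv U x + K * x) :
    Monotone fun s =>
      reduced γ lam U h w s - (1 + γ * h / 4 - K * h ^ 2 / 4 / (1 - γ * h / 4)) * s := by
  have hX : Monotone (xBar γ h w) := fun a b hab => by unfold xBar; gcongr
  have hZ : ∀ ℓ, Antitone (zBar γ lam h w ℓ) := fun ℓ a b hab => by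
    have := hlam ℓ
    unfold zBar; gcongr
    exact hX hab
  have hS : Antitone fun s => ∑ ℓ, lam ℓ * (zBar γ lam h w ℓ s + w ℓ.succ.castSucc) :=
    fun a b hab => Finset.sum_le_sum fun ℓ _ => by have := hlam ℓ; gcongr; exact hZ ℓ hab
  have hA := (monotone_segmentAvg_add_mul hU hUK (w (Fin.last (k + 1)))).comp hX
  have hX_affine : ∀ s, xBar γ h w s = xBar γ h w 0 + h / 2 / (1 - γ * h / 4) * s := by
    intro s; unfold xBar; ring
  convert ((hA.const_mul hh).add (hS.neg.const_mul (by positivity : 0 ≤ h / 2))).add_const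
    ((γ * h / 4 - 1) * w 0 - h * K / 2 * xBar γ h w 0) using 1
  ext s
  simp only [Function.comp, reduced_eq]
  linear_combination (-(h * K / 2)) * hX_affine s

end AVF

theorem stepSize_bounds {γ K h : ℝ} (k : ℕ) (hγ : 0 ≤ γ) (hh : 0 < h) (h₁ : h < 4 / (K + 1))
    (h₂ : h < 8 / (2 * γ + 2 * (K + 1) + γ * k)) :
    0 < 1 - γ * h / 4 ∧ 0 < 1 + γ * h / 4 - K * h ^ 2 / 4 / (1 - γ * h / 4) := by
  have hK : 0 < K + 1 := by
    by_contra! hK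
    linarith [div_nonpos_of_nonneg_of_nonpos zero_le_four hK]
  have hstep : h * (γ + K + 1) < 4 := by
    rw [lt_div_iff₀ (by positivity)] at h₂
    nlinarith [mul_nonneg (mul_nonneg hh.le hγ) k.cast_nonneg]
  have hD : 0 < 1 - γ * h / 4 := by nlinarith [mul_pos hh hK]
  refine ⟨hD, ?_⟩
  rw [sub_pos, div_lt_iff₀ hD]
  have hsq : (h * (γ + K + 1)) ^ 2 < 4 ^ 2 := by
    gcongr
    nlinarith
  -- `γ²h² + 4Kh² ≤ (γh)² + (Kh + h)² ≤ (γh + Kh + h)² < 16`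
  nlinarith [sq_nonneg (K * h - h), mul_nonneg (mul_nonneg hγ hh.le) (mul_pos hh hK).le]

theorem stmt_4_general (k : ℕ) (hk : 1 ≤ k) (γ : ℝ) (hγ : 0 < γ)
    (lam : Fin k → ℝ) (hlam : ∀ ℓ, 0 < lam ℓ) (K : ℝ)
    (U : ℝ → ℝ) (hU : ContDiff ℝ 2 U) (hU'' : ∀ x : ℝ, -K ≤ deriv (deriv U) x)
    (h : ℝ) (hh0 : 0 < h)
    (hh : h < min (4 / (K + 1))
      (min ((Finset.univ : Finset (Fin k)).inf' ⟨⟨0, hk⟩, Finset.mem_univ _⟩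
          (fun ℓ => 8 / (γ * lam ℓ ^ 2)))
        (8 / (2 * γ + 2 * (K + 1) + γ * (k : ℝ))))) :
    ∀ w : EuclideanSpace ℝ (Fin (k + 2)),
      ∃! y : EuclideanSpace ℝ (Fin (k + 2)), G k γ lam U h y w = 0 := by
  intro w
  obtain ⟨hD, hc⟩ := stepSize_bounds k hγ.le hh0 (hh.trans_le (min_le_left _ _))
    (hh.trans_le ((min_le_right _ _).trans (min_le_right _ _)))
  have hU' : Continuous (deriv U) := hU.differentiable_deriv_two.continuous
  have hUK : Monotone fun x => deriv U x + K * x :=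
    monotone_add_mul_of_neg_le_deriv hU.differentiable_deriv_two hU''
  obtain ⟨s, hs, hs_unique⟩ := existsUnique_eq_zero_of_monotone_sub_mul
    (f := AVF.reduced γ lam U h w) (AVF.continuous_reduced hU') hc
    (AVF.monotone_reduced_sub_mul hγ.le (fun ℓ => (hlam ℓ).le) hh0.le hD hU' hUK)
  refine ⟨AVF.lift γ lam h w s, (AVF.G_lift_eq_zero_iff hD.ne' s).2 hs, fun y hy => ?_⟩
  have hy_lift := AVF.eq_lift_of_G_eq_zero hD.ne' hy
  rw [hy_lift] at hy ⊢
  rw [hs_unique _ ((AVF.G_lift_eq_zero_iff hD.ne' _).1 hy)]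

/-- unique solvability of the implicit AVF step for `h ∈ (0, h*)`. -/
theorem stmt_4 (k : ℕ) (hk : 1 ≤ k) (γ : ℝ) (hγ : 0 < γ)
    (lam : Fin k → ℝ) (hlam : ∀ ℓ, 0 < lam ℓ) (K : ℝ) (hK : 0 < K)
    (U : ℝ → ℝ) (hU : ContDiff ℝ 2 U) (hU'' : ∀ x : ℝ, -K ≤ deriv (deriv U) x)
    (h : ℝ) (hh0 : 0 < h)
    (hh : h < min (4 / (K + 1))
      (min ((Finset.univ : Finset (Fin k)).inf' ⟨⟨0, hk⟩, Finset.mem_univ _⟩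
          (fun ℓ => 8 / (γ * lam ℓ ^ 2)))
        (8 / (2 * γ + 2 * (K + 1) + γ * (k : ℝ))))) :
    ∀ w : EuclideanSpace ℝ (Fin (k + 2)),
      ∃! y : EuclideanSpace ℝ (Fin (k + 2)), G k γ lam U h y w = 0 :=
  stmt_4_general k hk γ hγ lam hlam K U hU hU'' h hh0 hh
end

section
/- Let k ≥ 1 be an integer, γ > 0, λ₁,…,λ_k > 0, let U : ℝ → ℝ be continuously differentiable, and let h ∈ ℝ. If y, w ∈ ℝ^{k+2} satisfy G(y, w, h) = 0, then H(y) = H(w), where H(v, z, x) = ½v² + ½‖z‖² + U(x) + (γ/2)v x for (v, z, x) ∈ ℝ × ℝ^k × ℝ. In other words, the AVF discretization of the deterministic subsystem exactly preserves the Hamiltonian H. -/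
open scoped BigOperators

/-- The modified Hamiltonian `H(v,z,x) = ½v² + ½‖z‖² + U(x) + (γ/2) v x`
as a function on `ℝ^{k+2}`. -/
noncomputable def Hfun (k : ℕ) (γ : ℝ) (U : ℝ → ℝ)
    (Y : EuclideanSpace ℝ (Fin (k + 2))) : ℝ :=
  (1 / 2) * (Y 0) ^ 2 + (1 / 2) * ∑ ℓ : Fin k, (Y ℓ.succ.castSucc) ^ 2
    + U (Y (Fin.last (k + 1))) + (γ / 2) * Y 0 * Y (Fin.last (k + 1))

/-!
The AVF scheme is a discrete-gradient method. With the averaged gradient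
`ḡ = (½(v̄+v) + ¼γ(x̄+x), ½(z̄+z), ∫₀¹ U'(x + θ(x̄-x)) dθ + ¼γ(v̄+v))` one has
`H(y) - H(w) = ⟪ḡ, y - w⟫` by the fundamental theorem of calculus, while `G(y, w, h) = 0` says
`y - w = h J ḡ` for the skew-symmetric `J` given by `Δv = h(-ḡₓ + Σ λ_ℓ ḡ_{z_ℓ})`,
`Δz_ℓ = -h λ_ℓ ḡ_v`, `Δx = h ḡ_v`. Hence `H(y) - H(w) = h ⟪ḡ, J ḡ⟫ = 0`.
-/

noncomputable def avgDeriv (U : ℝ → ℝ) (a b : ℝ) : ℝ :=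
  ∫ θ in (0:ℝ)..1, deriv U (a + θ * (b - a))

theorem sub_eq_mul_avgDeriv {U : ℝ → ℝ} (hU : ContDiff ℝ 1 U) (a b : ℝ) :
    U b - U a = (b - a) * avgDeriv U a b := by
  have hftc : ∫ x in a..b, deriv U x = U b - U a :=
    intervalIntegral.integral_deriv_eq_sub (fun x _ => hU.differentiable one_ne_zero x)
      ((hU.continuous_deriv le_rfl).intervalIntegrable a b)
  simp_rw [avgDeriv, mul_comm _ (b - a), intervalIntegral.mul_integral_comp_add_mul]
  simpa using hftc.symm

section AVF

variable {k : ℕ} {γ : ℝ} {lam : Fin k → ℝ} {U : ℝ → ℝ} {h : ℝ}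
  (y w : EuclideanSpace ℝ (Fin (k + 2)))

theorem G_apply_zero :
    G k γ lam U h y w 0 =
      y 0 - w 0 + (γ * h / 4) * (y 0 + w 0)
        + h * avgDeriv U (w (Fin.last (k + 1))) (y (Fin.last (k + 1)))
        - (h / 2) * ∑ ℓ : Fin k, lam ℓ * (y ℓ.succ.castSucc + w ℓ.succ.castSucc) :=
  rfl

theorem G_apply_succ_castSucc (ℓ : Fin k) :
    G k γ lam U h y w ℓ.castSucc.succ =
      y ℓ.succ.castSucc - w ℓ.succ.castSucc + (lam ℓ * h / 2) * (y 0 + w 0)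
        + (γ * lam ℓ * h / 4) * (y (Fin.last (k + 1)) + w (Fin.last (k + 1))) := by
  simp [G]

theorem G_apply_last :
    G k γ lam U h y w (Fin.last (k + 1)) =
      y (Fin.last (k + 1)) - w (Fin.last (k + 1))
        - (γ * h / 4) * (y (Fin.last (k + 1)) + w (Fin.last (k + 1))) - (h / 2) * (y 0 + w 0) := by
  simp [G, ← Fin.succ_last]

theorem Hfun_sub_Hfun (hU : ContDiff ℝ 1 U) :
    Hfun k γ U y - Hfun k γ U w =
      ((y 0 + w 0) / 2 + γ / 4 * (y (Fin.last (k + 1)) + w (Fin.last (k + 1)))) * (y 0 - w 0)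
        + ∑ ℓ : Fin k, (y ℓ.succ.castSucc + w ℓ.succ.castSucc) / 2
            * (y ℓ.succ.castSucc - w ℓ.succ.castSucc)
        + (avgDeriv U (w (Fin.last (k + 1))) (y (Fin.last (k + 1))) + γ / 4 * (y 0 + w 0))
            * (y (Fin.last (k + 1)) - w (Fin.last (k + 1))) := by
  have hU' := sub_eq_mul_avgDeriv hU (w (Fin.last (k + 1))) (y (Fin.last (k + 1)))
  have hz : ∑ ℓ : Fin k, (y ℓ.succ.castSucc) ^ 2 - ∑ ℓ : Fin k, (w ℓ.succ.castSucc) ^ 2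
      = 2 * ∑ ℓ : Fin k, (y ℓ.succ.castSucc + w ℓ.succ.castSucc) / 2
          * (y ℓ.succ.castSucc - w ℓ.succ.castSucc) := by
    rw [← Finset.sum_sub_distrib, Finset.mul_sum]
    exact Finset.sum_congr rfl fun ℓ _ => by ring
  unfold Hfun
  linear_combination hU' + hz / 2

end AVF

theorem stmt_7_general (k : ℕ) (γ : ℝ)
    (lam : Fin k → ℝ)
    (U : ℝ → ℝ) (hU : ContDiff ℝ 1 U) (h : ℝ)
    (y w : EuclideanSpace ℝ (Fin (k + 2)))
    (hG : G k γ lam U h y w = 0) :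
    Hfun k γ U y = Hfun k γ U w := by
  have hGi (i : Fin (k + 2)) : G k γ lam U h y w i = 0 := by rw [hG]; rfl
  have hv := (G_apply_zero y w).symm.trans (hGi 0)
  have hx := (G_apply_last y w).symm.trans (hGi (Fin.last (k + 1)))
  have hz : ∑ ℓ : Fin k, (y ℓ.succ.castSucc + w ℓ.succ.castSucc) / 2
        * (y ℓ.succ.castSucc - w ℓ.succ.castSucc)
      = -(h / 2) * ((y 0 + w 0) / 2 + γ / 4 * (y (Fin.last (k + 1)) + w (Fin.last (k + 1))))
          * ∑ ℓ : Fin k, lam ℓ * (y ℓ.succ.castSucc + w ℓ.succ.castSucc) := by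
    rw [Finset.mul_sum]
    refine Finset.sum_congr rfl fun ℓ _ => ?_
    linear_combination (y ℓ.succ.castSucc + w ℓ.succ.castSucc) / 2
      * (G_apply_succ_castSucc y w ℓ).symm.trans (hGi ℓ.castSucc.succ)
  rw [← sub_eq_zero, Hfun_sub_Hfun y w hU, hz]
  linear_combination
    ((y 0 + w 0) / 2 + γ / 4 * (y (Fin.last (k + 1)) + w (Fin.last (k + 1)))) * hv
      + (avgDeriv U (w (Fin.last (k + 1))) (y (Fin.last (k + 1))) + γ / 4 * (y 0 + w 0)) * hx

/-- the AVF discretization of the deterministic subsystem exactly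
preserves the modified Hamiltonian `H`. -/
theorem stmt_7 (k : ℕ) (hk : 1 ≤ k) (γ : ℝ) (hγ : 0 < γ)
    (lam : Fin k → ℝ) (hlam : ∀ ℓ, 0 < lam ℓ)
    (U : ℝ → ℝ) (hU : ContDiff ℝ 1 U) (h : ℝ)
    (y w : EuclideanSpace ℝ (Fin (k + 2)))
    (hG : G k γ lam U h y w = 0) :
    Hfun k γ U y = Hfun k γ U w :=
  stmt_7_general k γ lam U hU h y w hG
end

section
/- Let k ≥ 1 be an integer, m ≥ 2 an integer, γ > 0, α₁,…,α_k > 0, λ₁,…,λ_k > 0, and C₁, C₂, C₃, C₄, C₅ > 0. Let U : ℝ → ℝ be continuously differentiable with −C₃ + C₁|x|^{2m} ≤ U(x) ≤ C₂|x|^{2m} + C₃ and x·U′(x) ≥ C₄|x|^{2m} − C₅ for all x ∈ ℝ. Then there exist constants c > 0 and C > 0 such that for all (v, z, x) ∈ ℝ × ℝ^k × ℝ: −(γ/2)v² − (γ/2)x U′(x) − (γ²/2)x v − Σ_{ℓ=1}^{k} α_ℓ z_ℓ² + (γ/2)Σ_{ℓ=1}^{k} λ_ℓ z_ℓ x ≤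 −c H(v, z, x) + C, where H(v, z, x) = ½v² + ½‖z‖² + U(x) + (γ/2)v x. (The left-hand side equals ⟨∇H(Y), μ̃(Y)⟩, where μ̃(v, z, x) = ( −(γ/2)v, (−α_ℓ z_ℓ + (γ/2)λ_ℓ x)_{ℓ=1,…,k}, −(γ/2)x ) is the drift of the stochastic subsystem of the splitting.) -/
open scoped BigOperators

lemma aux_pow (a K : ℝ) (ha : 0 < a) (hK : 0 ≤ K) (m : ℕ) (hm : 2 ≤ m) (t : ℝ) :
    K * t ^ 2 ≤ a * t ^ (2 * m) + K * max 1 (K / a) := by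
  rcases le_or_gt (t ^ 2) (max 1 (K / a)) with h | h
  · have h1 : K * t ^ 2 ≤ K * max 1 (K / a) := mul_le_mul_of_nonneg_left h hK
    have h2 : 0 ≤ a * t ^ (2 * m) := mul_nonneg ha.le (by rw [pow_mul]; positivity)
    linarith
  · have h1 : (1:ℝ) ≤ t ^ 2 := le_of_lt (lt_of_le_of_lt (le_max_left _ _) h)
    have h2 : K / a < t ^ 2 := lt_of_le_of_lt (le_max_right _ _) h
    have hK' : K < a * t ^ 2 := by rw [div_lt_iff₀ ha] at h2; linarith
    have h3 : t ^ (2 * m) = (t ^ 2) ^ m := by rw [pow_mul]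
    have h4 : (t ^ 2) ^ 2 ≤ (t ^ 2) ^ m := pow_le_pow_right₀ h1 hm
    have h5 : K * t ^ 2 ≤ a * t ^ 2 * t ^ 2 :=
      mul_le_mul_of_nonneg_right hK'.le (sq_nonneg t)
    have h6 : a * (t ^ 2) ^ 2 ≤ a * (t ^ 2) ^ m := mul_le_mul_of_nonneg_left h4 ha.le
    have hnn : 0 ≤ K * max 1 (K / a) :=
      mul_nonneg hK (le_trans zero_le_one (le_max_left _ _))
    nlinarith [h5, h6]

set_option maxHeartbeats 1000000 in
/-- dissipativity of the drift of the stochastic subsystem with respect to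
the modified Hamiltonian `H(v,z,x) = ½v² + ½‖z‖² + U(x) + (γ/2)vx`. -/
theorem stmt_10 (k : ℕ) (hk : 1 ≤ k) (m : ℕ) (hm : 2 ≤ m)
    (γ : ℝ) (hγ : 0 < γ) (α lam : Fin k → ℝ)
    (hα : ∀ ℓ, 0 < α ℓ) (hlam : ∀ ℓ, 0 < lam ℓ)
    (C₁ C₂ C₃ C₄ C₅ : ℝ) (hC₁ : 0 < C₁) (hC₂ : 0 < C₂) (hC₃ : 0 < C₃)
    (hC₄ : 0 < C₄) (hC₅ : 0 < C₅)
    (U : ℝ → ℝ) (hU : ContDiff ℝ 1 U)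
    (hUlow : ∀ x : ℝ, -C₃ + C₁ * |x| ^ (2 * m) ≤ U x)
    (hUup : ∀ x : ℝ, U x ≤ C₂ * |x| ^ (2 * m) + C₃)
    (hUx : ∀ x : ℝ, C₄ * |x| ^ (2 * m) - C₅ ≤ x * deriv U x) :
    ∃ c > (0 : ℝ), ∃ C > (0 : ℝ), ∀ (v : ℝ) (z : Fin k → ℝ) (x : ℝ),
      -(γ / 2) * v ^ 2 - (γ / 2) * (x * deriv U x) - (γ ^ 2 / 2) * (x * v)
          - ∑ ℓ, α ℓ * z ℓ ^ 2 + (γ / 2) * ∑ ℓ, lam ℓ * z ℓ * x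
        ≤ -c * ((1 / 2) * v ^ 2 + (1 / 2) * ∑ ℓ, z ℓ ^ 2 + U x + (γ / 2) * v * x) + C := by
  haveI : Nonempty (Fin k) := ⟨⟨0, hk⟩⟩
  set A : ℝ := Finset.univ.inf' Finset.univ_nonempty α with hA
  have hA0 : 0 < A := by
    rw [hA, Finset.lt_inf'_iff]
    exact fun ℓ _ => hα ℓ
  set c : ℝ := min (min (γ / 2) (γ * C₄ / (4 * C₂))) A with hcdef
  have hc0 : 0 < c := lt_min (lt_min (by positivity) (by positivity)) hA0
  have hcγ : c ≤ γ / 2 := le_trans (min_le_left _ _) (min_le_left _ _)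
  have hcC : c ≤ γ * C₄ / (4 * C₂) := le_trans (min_le_left _ _) (min_le_right _ _)
  have hcα : ∀ ℓ, c ≤ α ℓ := fun ℓ =>
    le_trans (min_le_right _ _) (Finset.inf'_le _ (Finset.mem_univ ℓ))
  set D : ℝ := ∑ ℓ, γ ^ 2 * lam ℓ ^ 2 / (8 * α ℓ) with hD
  have hD0 : 0 ≤ D := Finset.sum_nonneg fun ℓ _ => by
    have := hα ℓ; positivity
  set M : ℝ := max 1 ((γ ^ 3 / 4 + D) / (γ * C₄ / 4)) with hM
  have hM1 : (1:ℝ) ≤ M := le_max_left _ _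
  refine ⟨c, hc0, c * C₃ + γ * C₅ / 2 + (γ ^ 3 / 4 + D) * M + 1, ?_, ?_⟩
  · have : 0 ≤ (γ ^ 3 / 4 + D) * M :=
      mul_nonneg (by positivity) (le_trans zero_le_one hM1)
    nlinarith [mul_pos hc0 hC₃, mul_pos hγ hC₅]
  intro v z x
  -- v part
  have hv : (c - γ) / 2 * v ^ 2 + ((c - γ) * γ / 2) * (v * x) ≤ γ ^ 3 / 4 * x ^ 2 := by
    nlinarith [mul_nonneg (by linarith : (0:ℝ) ≤ γ / 2 - c) (sq_nonneg (v + γ / 2 * x)),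
      mul_nonneg hc0.le (sq_nonneg (v + γ / 2 * x)),
      mul_pos (mul_pos hγ hγ) hγ, mul_pos (mul_pos hγ hγ) hc0]
  -- z part, termwise
  have hzterm : ∀ ℓ : Fin k,
      (c / 2 - α ℓ) * z ℓ ^ 2 + γ / 2 * (lam ℓ * z ℓ * x)
        ≤ γ ^ 2 * lam ℓ ^ 2 / (8 * α ℓ) * x ^ 2 := by
    intro ℓ
    have hαℓ := hα ℓ
    rw [show γ ^ 2 * lam ℓ ^ 2 / (8 * α ℓ) * x ^ 2
        = γ ^ 2 * lam ℓ ^ 2 * x ^ 2 / (8 * α ℓ) from by ring,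
      le_div_iff₀ (by positivity : (0:ℝ) < 8 * α ℓ)]
    nlinarith [sq_nonneg (2 * α ℓ * z ℓ - γ * lam ℓ * x), hcα ℓ, sq_nonneg (z ℓ),
      mul_nonneg (mul_nonneg hαℓ.le (by linarith [hcα ℓ] : (0:ℝ) ≤ α ℓ - c)) (sq_nonneg (z ℓ))]
  have hz : c / 2 * (∑ ℓ, z ℓ ^ 2) - (∑ ℓ, α ℓ * z ℓ ^ 2)
      + γ / 2 * (∑ ℓ, lam ℓ * z ℓ * x) ≤ D * x ^ 2 := by
    have h1 : ∑ ℓ, ((c / 2 - α ℓ) * z ℓ ^ 2 + γ / 2 * (lam ℓ * z ℓ * x))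
        ≤ ∑ ℓ, γ ^ 2 * lam ℓ ^ 2 / (8 * α ℓ) * x ^ 2 :=
      Finset.sum_le_sum fun ℓ _ => hzterm ℓ
    have h2 : ∑ ℓ, ((c / 2 - α ℓ) * z ℓ ^ 2 + γ / 2 * (lam ℓ * z ℓ * x))
        = c / 2 * (∑ ℓ, z ℓ ^ 2) - (∑ ℓ, α ℓ * z ℓ ^ 2)
          + γ / 2 * (∑ ℓ, lam ℓ * z ℓ * x) := by
      rw [Finset.sum_add_distrib, Finset.mul_sum, Finset.mul_sum]
      congr 1
      rw [← Finset.sum_sub_distrib]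
      refine Finset.sum_congr rfl fun ℓ _ => by ring
    have h3 : ∑ ℓ, γ ^ 2 * lam ℓ ^ 2 / (8 * α ℓ) * x ^ 2 = D * x ^ 2 := by
      rw [hD, Finset.sum_mul]
    linarith [h1, h2.symm.le, h3.le]
  -- x part
  have hx : c * U x - γ / 2 * (x * deriv U x)
      ≤ -(γ * C₄ / 4) * |x| ^ (2 * m) + (c * C₃ + γ * C₅ / 2) := by
    have h1 : c * U x ≤ c * (C₂ * |x| ^ (2 * m) + C₃) :=
      mul_le_mul_of_nonneg_left (hUup x) hc0.le
    have h2 : γ / 2 * (C₄ * |x| ^ (2 * m) - C₅) ≤ γ / 2 * (x * deriv U x) :=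
      mul_le_mul_of_nonneg_left (hUx x) (by positivity)
    have h3 : c * C₂ ≤ γ * C₄ / 4 := by
      rw [le_div_iff₀ (by positivity : (0:ℝ) < 4 * C₂)] at hcC
      linarith
    have ht : (0:ℝ) ≤ |x| ^ (2 * m) := by positivity
    nlinarith [mul_le_mul_of_nonneg_right h3 ht]
  -- power absorption
  have hK : (γ ^ 3 / 4 + D) * x ^ 2 ≤ γ * C₄ / 4 * |x| ^ (2 * m) + (γ ^ 3 / 4 + D) * M := by
    have := aux_pow (γ * C₄ / 4) (γ ^ 3 / 4 + D) (by positivity) (add_nonneg (by positivity) hD0) m hm |x|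
    rwa [sq_abs] at this
  have expand :
      -(γ / 2) * v ^ 2 - (γ / 2) * (x * deriv U x) - (γ ^ 2 / 2) * (x * v)
          - ∑ ℓ, α ℓ * z ℓ ^ 2 + (γ / 2) * ∑ ℓ, lam ℓ * z ℓ * x
        + c * ((1 / 2) * v ^ 2 + (1 / 2) * ∑ ℓ, z ℓ ^ 2 + U x + (γ / 2) * v * x)
      = ((c - γ) / 2 * v ^ 2 + ((c - γ) * γ / 2) * (v * x))
        + (c / 2 * (∑ ℓ, z ℓ ^ 2) - (∑ ℓ, α ℓ * z ℓ ^ 2)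
            + γ / 2 * (∑ ℓ, lam ℓ * z ℓ * x))
        + (c * U x - γ / 2 * (x * deriv U x)) := by ring
  linarith [hv, hz, hx, hK, expand.le, expand.ge]
end

section
/- Let k ≥ 1 be an integer, m ≥ 2 an integer, γ > 0, and C₁, C₃ > 0. Let U : ℝ → ℝ satisfy U(x) ≥ C₁|x|^{2m} − C₃ for all x ∈ ℝ. Then there exist constants c > 0 and C > 0 such that for all (v, z, x) ∈ ℝ × ℝ^k × ℝ: H(v, z, x) ≥ c( v² + ‖z‖² + |x|^{2m} ) − C, where H(v, z, x) = ½v² + ½‖z‖² + U(x) + (γ/2)v x. In particular, H is bounded below on ℝ^{k+2}. -/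
open scoped BigOperators

lemma stmt_12_aux (m : ℕ) (hm : 2 ≤ m) (δ K : ℝ) (hδ : 0 < δ) (hK : 0 < K)
    (t : ℝ) (ht : 0 ≤ t) :
    K * t ≤ δ * t ^ m + K * max (K / δ) 1 := by
  set A := max (K / δ) 1 with hA
  have hA1 : (1:ℝ) ≤ A := le_max_right _ _
  rcases le_total t A with h | h
  · have h1 : K * t ≤ K * A := mul_le_mul_of_nonneg_left h hK.le
    have h2 : 0 ≤ δ * t ^ m := by positivity
    linarith
  · have h1 : (1:ℝ) ≤ t := le_trans hA1 h
    have h2 : K / δ ≤ t := le_trans (le_max_left _ _) h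
    have h3 : t ≤ t ^ (m - 1) := by
      calc t = t ^ 1 := (pow_one t).symm
        _ ≤ t ^ (m - 1) := pow_le_pow_right₀ h1 (by omega)
    have hKδ : K ≤ δ * t ^ (m - 1) := by
      have h4 : K / δ ≤ t ^ (m - 1) := le_trans h2 h3
      calc K = δ * (K / δ) := by field_simp
        _ ≤ δ * t ^ (m - 1) := by nlinarith
    have h5 : δ * t ^ (m - 1) * t = δ * t ^ m := by
      rw [mul_assoc, ← pow_succ]
      congr 2
      omega
    have h6 : K * t ≤ δ * t ^ (m - 1) * t := by nlinarith
    have h7 : 0 ≤ K * A := by positivity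
    linarith

/-- the modified Hamiltonian `H(v,z,x) = ½v² + ½‖z‖² + U(x) + (γ/2)vx`
dominates `c(v² + ‖z‖² + |x|^{2m}) − C`; in particular it is bounded below. -/
theorem stmt_12 (k : ℕ) (hk : 1 ≤ k) (m : ℕ) (hm : 2 ≤ m)
    (γ : ℝ) (hγ : 0 < γ) (C₁ C₃ : ℝ) (hC₁ : 0 < C₁) (hC₃ : 0 < C₃)
    (U : ℝ → ℝ) (hUlow : ∀ x : ℝ, C₁ * |x| ^ (2 * m) - C₃ ≤ U x) :
    ∃ c > (0 : ℝ), ∃ C > (0 : ℝ),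
      (∀ (v : ℝ) (z : Fin k → ℝ) (x : ℝ),
        c * (v ^ 2 + ∑ ℓ, z ℓ ^ 2 + |x| ^ (2 * m)) - C
          ≤ (1 / 2) * v ^ 2 + (1 / 2) * ∑ ℓ, z ℓ ^ 2 + U x + (γ / 2) * v * x)
      ∧ (∀ (v : ℝ) (z : Fin k → ℝ) (x : ℝ),
          -C ≤ (1 / 2) * v ^ 2 + (1 / 2) * ∑ ℓ, z ℓ ^ 2 + U x + (γ / 2) * v * x) := by
  set K : ℝ := γ ^ 2 / 4 with hKdef
  have hK : 0 < K := by positivity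
  set c : ℝ := min (1/4) (C₁ / 2) with hcdef
  have hc : 0 < c := lt_min (by norm_num) (by linarith)
  set C : ℝ := C₃ + K * max (K / (C₁ / 2)) 1 with hCdef
  have hCpos : 0 < C := by
    have h1 : (1:ℝ) ≤ max (K / (C₁ / 2)) 1 := le_max_right _ _
    rw [hCdef]
    nlinarith
  have key : ∀ (v : ℝ) (z : Fin k → ℝ) (x : ℝ),
      c * (v ^ 2 + ∑ ℓ, z ℓ ^ 2 + |x| ^ (2 * m)) - C
        ≤ (1 / 2) * v ^ 2 + (1 / 2) * ∑ ℓ, z ℓ ^ 2 + U x + (γ / 2) * v * x := by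
    intro v z x
    set S : ℝ := ∑ ℓ, z ℓ ^ 2 with hSdef
    have hS : 0 ≤ S := Finset.sum_nonneg fun i _ => sq_nonneg _
    have habs : |x| ^ (2 * m) = (x ^ 2) ^ m := by
      rw [pow_mul, sq_abs]
    have hU := hUlow x
    rw [habs] at hU ⊢
    set T : ℝ := (x ^ 2) ^ m with hTdef
    have hT : 0 ≤ T := by positivity
    have hvx : -((1/4) * v ^ 2 + K * x ^ 2) ≤ (γ / 2) * v * x := by
      rw [hKdef]
      nlinarith [sq_nonneg (v + γ * x)]
    have haux : K * x ^ 2 ≤ (C₁ / 2) * T + K * max (K / (C₁ / 2)) 1 :=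
      stmt_12_aux m hm (C₁ / 2) K (by linarith) hK (x ^ 2) (sq_nonneg x)
    have h1 : c * v ^ 2 ≤ (1/4) * v ^ 2 :=
      mul_le_mul_of_nonneg_right (min_le_left _ _) (sq_nonneg v)
    have h2 : c * S ≤ (1/2) * S := by
      have : c ≤ (1/2 : ℝ) := le_trans (min_le_left _ _) (by norm_num)
      exact mul_le_mul_of_nonneg_right this hS
    have h3 : c * T ≤ (C₁ / 2) * T :=
      mul_le_mul_of_nonneg_right (min_le_right _ _) hT
    have hexp : c * (v ^ 2 + S + T) = c * v ^ 2 + c * S + c * T := by ring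
    rw [hCdef]
    linarith
  refine ⟨c, hc, C, hCpos, key, fun v z x => ?_⟩
  have h := key v z x
  have hnn : 0 ≤ c * (v ^ 2 + ∑ ℓ, z ℓ ^ 2 + |x| ^ (2 * m)) := by
    have : 0 ≤ v ^ 2 + ∑ ℓ, z ℓ ^ 2 + |x| ^ (2 * m) := by
      have hS : 0 ≤ ∑ ℓ, z ℓ ^ 2 := Finset.sum_nonneg fun i _ => sq_nonneg _
      positivity
    positivity
  linarith
end
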